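/- Let P be a Köthe set on a set I with P ≺ P², and let A = λ(P) with pointwise multiplication. Then A² = { a² : a ∈ A } = { a ∈ A : (√|a_i|)_{i∈I} ∈ A }, where A² is the linear span of {ab : a, b ∈ A}. -/

import Mathlib

/-!
Write `λ(P)` for the Köthe space and `√|a|` for `i ↦ √‖a i‖`. The set
`{a ∈ λ(P) : √|a| ∈ λ(P)}` is a subspace, since `√|a + b| ≤ √|a| + √|b|` and
`√|r a| = √|r| √|a|`, and it contains every product `b c`: `b c ∈ λ(P)` because `P ≺ P²`,
and `√|b c| ≤ |b| + |c|`. Hence it contains the span of the products. Conversely each of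
its elements `a` is the square of the coordinatewise principal square root of `a`, which
lies in `λ(P)` because its modulus is `√|a|`; and squares are products.
-/

open Real

section

variable {I : Type*} {P : Set (I → ℝ)}

def kotheSpace (P : Set (I → ℝ)) : Set (I → ℂ) :=
  {x | ∀ p ∈ P, Summable fun i => ‖x i‖ * p i}

noncomputable def sqrtNorm (a : I → ℂ) : I → ℂ := fun i => (√‖a i‖ : ℂ)

theorem norm_sqrtNorm (a : I → ℂ) (i : I) : ‖sqrtNorm a i‖ = √‖a i‖ :=
  Complex.norm_of_nonneg (sqrt_nonneg _)

theorem Real.sqrt_add_le_add_sqrt {x y : ℝ} (hx : 0 ≤ x) (hy : 0 ≤ y) : √(x + y) ≤ √x + √y := by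
  rw [sqrt_le_left (by positivity)]
  nlinarith [sq_sqrt hx, sq_sqrt hy, sqrt_nonneg x, sqrt_nonneg y]

theorem Real.sqrt_mul_le_add {x y : ℝ} (hx : 0 ≤ x) (hy : 0 ≤ y) : √(x * y) ≤ x + y := by
  rw [sqrt_le_left (by positivity)]
  nlinarith

theorem zero_mem_kotheSpace : (0 : I → ℂ) ∈ kotheSpace P :=
  fun _ _ => by simp

section NonnegWeights

variable (hP : ∀ p ∈ P, ∀ i, 0 ≤ p i)
include hP

theorem mem_kotheSpace_of_norm_le {x : I → ℂ} {g : I → ℝ}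
    (hg : ∀ p ∈ P, Summable fun i => g i * p i) (hxg : ∀ i, ‖x i‖ ≤ g i) :
    x ∈ kotheSpace P := fun p hp =>
  (hg p hp).of_nonneg_of_le (fun i => mul_nonneg (norm_nonneg _) (hP p hp i))
    fun i => mul_le_mul_of_nonneg_right (hxg i) (hP p hp i)

theorem mem_kotheSpace_of_norm_le_add {x y z : I → ℂ} (hy : y ∈ kotheSpace P)
    (hz : z ∈ kotheSpace P) (h : ∀ i, ‖x i‖ ≤ ‖y i‖ + ‖z i‖) : x ∈ kotheSpace P :=
  mem_kotheSpace_of_norm_le hP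
    (fun p hp => by simpa only [add_mul] using (hy p hp).add (hz p hp)) h

theorem mem_kotheSpace_of_norm_le_mul {x y : I → ℂ} (c : ℝ) (hy : y ∈ kotheSpace P)
    (h : ∀ i, ‖x i‖ ≤ c * ‖y i‖) : x ∈ kotheSpace P :=
  mem_kotheSpace_of_norm_le hP
    (fun p hp => by simpa only [mul_assoc] using (hy p hp).mul_left c) h

def kotheSubmodule : Submodule ℂ (I → ℂ) where
  carrier := kotheSpace P
  add_mem' ha hb := mem_kotheSpace_of_norm_le_add hP ha hb fun _ => norm_add_le _ _
  zero_mem' := zero_mem_kotheSpace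
  smul_mem' r _ ha := mem_kotheSpace_of_norm_le_mul hP ‖r‖ ha fun _ => (norm_smul r _).le

noncomputable def sqrtNormSubmodule : Submodule ℂ (I → ℂ) where
  carrier := {a | sqrtNorm a ∈ kotheSpace P}
  add_mem' {a b} ha hb := mem_kotheSpace_of_norm_le_add hP ha hb fun i => by
    simp only [norm_sqrtNorm, Pi.add_apply]
    exact (sqrt_le_sqrt (norm_add_le _ _)).trans
      (sqrt_add_le_add_sqrt (norm_nonneg _) (norm_nonneg _))
  zero_mem' := by
    show sqrtNorm 0 ∈ kotheSpace P
    rw [show sqrtNorm (0 : I → ℂ) = 0 from funext fun _ => by simp [sqrtNorm]]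
    exact zero_mem_kotheSpace
  smul_mem' r a ha := mem_kotheSpace_of_norm_le_mul hP √‖r‖ ha fun i => by
    rw [norm_sqrtNorm, norm_sqrtNorm, Pi.smul_apply, norm_smul, sqrt_mul (norm_nonneg r)]

theorem mul_mem_kotheSpace (hPP2 : ∀ p ∈ P, ∃ q ∈ P, ∃ C : ℝ, 0 < C ∧ ∀ i, p i ≤ C * (q i) ^ 2)
    {b c : I → ℂ} (hb : b ∈ kotheSpace P) (hc : c ∈ kotheSpace P) : b * c ∈ kotheSpace P := by
  intro p hp
  obtain ⟨q, hq, C, hC, hpq⟩ := hPP2 p hp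
  have hcq_nonneg : ∀ i, 0 ≤ ‖c i‖ * q i := fun i => mul_nonneg (norm_nonneg _) (hP q hq i)
  set M := ∑' i, ‖c i‖ * q i
  have hcq_le : ∀ i, ‖c i‖ * q i ≤ M := fun i => (hc q hq).le_tsum i fun j _ => hcq_nonneg j
  refine ((hb q hq).mul_left (C * M)).of_nonneg_of_le
    (fun i => mul_nonneg (norm_nonneg _) (hP p hp i)) fun i => ?_
  have hbq_nonneg : 0 ≤ C * (‖b i‖ * q i) :=
    mul_nonneg hC.le (mul_nonneg (norm_nonneg _) (hP q hq i))
  calc ‖(b * c) i‖ * p i = ‖b i‖ * ‖c i‖ * p i := by rw [Pi.mul_apply, norm_mul]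
    _ ≤ ‖b i‖ * ‖c i‖ * (C * q i ^ 2) := by gcongr; exact hpq i
    _ = C * (‖b i‖ * q i) * (‖c i‖ * q i) := by ring
    _ ≤ C * (‖b i‖ * q i) * M := mul_le_mul_of_nonneg_left (hcq_le i) hbq_nonneg
    _ = C * M * (‖b i‖ * q i) := by ring

theorem sqrtNorm_mul_mem_kotheSpace {b c : I → ℂ} (hb : b ∈ kotheSpace P)
    (hc : c ∈ kotheSpace P) : sqrtNorm (b * c) ∈ kotheSpace P :=
  mem_kotheSpace_of_norm_le_add hP hb hc fun i => by
    rw [norm_sqrtNorm, Pi.mul_apply, norm_mul]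
    exact sqrt_mul_le_add (norm_nonneg _) (norm_nonneg _)

end NonnegWeights

theorem exists_mem_kotheSpace_mul_self_eq {a : I → ℂ} (ha : sqrtNorm a ∈ kotheSpace P) :
    ∃ s ∈ kotheSpace P, a = fun i => s i * s i := by
  refine ⟨fun i => a i ^ ((2 : ℕ)⁻¹ : ℂ), fun p hp => ?_, funext fun i => ?_⟩
  · have hnorm : ∀ i, ‖a i ^ ((2 : ℕ)⁻¹ : ℂ)‖ = ‖sqrtNorm a i‖ := fun i => by
      rw [Complex.norm_cpow_inv_nat, norm_sqrtNorm, sqrt_eq_rpow]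
      norm_num
    simpa only [hnorm] using ha p hp
  · rw [← pow_two, Complex.cpow_nat_inv_pow _ two_ne_zero]

end

theorem kothe_square_description_general {I : Type*} (P : Set (I → ℝ))
    (hP0 : ∀ p ∈ P, ∀ i, 0 ≤ p i)
    (hPP2 : ∀ p ∈ P, ∃ q ∈ P, ∃ C : ℝ, 0 < C ∧ ∀ i, p i ≤ C * (q i) ^ 2)
    (Λ : Set (I → ℂ))
    (hΛ : Λ = {x | ∀ p ∈ P, Summable fun i => ‖x i‖ * p i}) :
    (Submodule.span ℂ {x : I → ℂ | ∃ b ∈ Λ, ∃ c ∈ Λ, x = fun i => b i * c i} : Set (I → ℂ))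
      = {x : I → ℂ | ∃ a ∈ Λ, x = fun i => a i * a i} ∧
    (Submodule.span ℂ {x : I → ℂ | ∃ b ∈ Λ, ∃ c ∈ Λ, x = fun i => b i * c i} : Set (I → ℂ))
      = {a ∈ Λ | (fun i => (Real.sqrt (‖a i‖) : ℂ)) ∈ Λ} := by
  obtain rfl : Λ = kotheSpace P := hΛ
  set A := kotheSubmodule hP0 ⊓ sqrtNormSubmodule hP0
  have products_subset : (Submodule.span ℂ {x | ∃ b ∈ kotheSpace P, ∃ c ∈ kotheSpace P,
      x = fun i => b i * c i} : Set (I → ℂ)) ⊆ A := Submodule.span_le.2 <| by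
    rintro _ ⟨b, hb, c, hc, rfl⟩
    exact ⟨mul_mem_kotheSpace hP0 hPP2 hb hc, sqrtNorm_mul_mem_kotheSpace hP0 hb hc⟩
  have subset_squares : (A : Set (I → ℂ)) ⊆ {x | ∃ a ∈ kotheSpace P, x = fun i => a i * a i} :=
    fun _ ha => exists_mem_kotheSpace_mul_self_eq ha.2
  have squares_subset_span : {x | ∃ a ∈ kotheSpace P, x = fun i => a i * a i} ⊆
      Submodule.span ℂ {x | ∃ b ∈ kotheSpace P, ∃ c ∈ kotheSpace P, x = fun i => b i * c i} := by
    rintro _ ⟨a, ha, rfl⟩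
    exact Submodule.subset_span ⟨a, ha, a, ha, rfl⟩
  exact ⟨(products_subset.trans subset_squares).antisymm squares_subset_span,
    products_subset.antisymm (subset_squares.trans squares_subset_span)⟩

/-- For a Köthe algebra `A = λ(P)` (with `P ≺ P²`),
`A² = {a² : a ∈ A} = {a ∈ A : √|a| ∈ A}`, where `A²` is the linear span of products. -/
theorem kothe_square_description {I : Type*} (P : Set (I → ℝ))
    (hP0 : ∀ p ∈ P, ∀ i, 0 ≤ p i)
    (hP1 : ∀ i, ∃ p ∈ P, 0 < p i)
    (hP2 : ∀ p ∈ P, ∀ q ∈ P, ∃ r ∈ P, ∀ i, max (p i) (q i) ≤ r i)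
    (hPP2 : ∀ p ∈ P, ∃ q ∈ P, ∃ C : ℝ, 0 < C ∧ ∀ i, p i ≤ C * (q i) ^ 2)
    (Λ : Set (I → ℂ))
    (hΛ : Λ = {x | ∀ p ∈ P, Summable fun i => ‖x i‖ * p i}) :
    (Submodule.span ℂ {x : I → ℂ | ∃ b ∈ Λ, ∃ c ∈ Λ, x = fun i => b i * c i} : Set (I → ℂ))
      = {x : I → ℂ | ∃ a ∈ Λ, x = fun i => a i * a i} ∧
    (Submodule.span ℂ {x : I → ℂ | ∃ b ∈ Λ, ∃ c ∈ Λ, x = fun i => b i * c i} : Set (I → ℂ))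
      = {a ∈ Λ | (fun i => (Real.sqrt (‖a i‖) : ℂ)) ∈ Λ} :=
  kothe_square_description_general P hP0 hPP2 Λ hΛ
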